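/- The vector space k⟨A⟩ equipped with the quasi-shuffle product * is a commutative associative k-algebra with unit the empty word 1; likewise, k⟨A⟩ equipped with the product ⋆ is a commutative associative k-algebra with unit 1. -/

import Mathlib

/-!
Setting (Hoffman–Ihara, "Quasi-shuffle products revisited"):
`k` is a field containing `ℚ`, `A` a countable set of letters, `kA` the `k`-vector space
with basis `A` equipped with an associative commutative bilinear product `⋄` (given below as
a bilinear map `d`), and `k⟨A⟩` the noncommutative polynomial algebra on `A`, realized as
the monoid algebra of the free monoid of words on `A`.
-/

noncomputable section

open scoped BigOperators TensorProduct

section QuasiShuffle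

variable (k A : Type*) [Field k] [CharZero k] [Countable A]

/-- `k⟨A⟩`, the noncommutative polynomial algebra on `A`: the `k`-vector space with basis
the words in `A`, with concatenation product and unit the empty word. -/
abbrev KAlg : Type _ := MonoidAlgebra k (FreeMonoid A)

/-- `kA`, the `k`-vector space with basis `A`. -/
abbrev KA : Type _ := A →₀ k

variable {k A}

/-- The basis element of `k⟨A⟩` corresponding to a word. -/
def word (w : List A) : KAlg k A := MonoidAlgebra.of k (FreeMonoid A) (FreeMonoid.ofList w)

/-- Linear extension to `k⟨A⟩` of a function defined on words. -/
def liftW {N : Type*} [AddCommMonoid N] [Module k N] (g : List A → N) :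
    KAlg k A →ₗ[k] N :=
  (Finsupp.lsum k fun w => LinearMap.toSpanSingleton k N (g (FreeMonoid.toList w))) ∘ₗ
    (MonoidAlgebra.coeffLinearEquiv k).toLinearMap

/-- The inclusion of `kA` into `k⟨A⟩` (letters as one-letter words). -/
def incl : KA k A →ₗ[k] KAlg k A :=
  Finsupp.lsum k fun a => LinearMap.toSpanSingleton k (KAlg k A) (word [a])

set_option linter.unusedSectionVars false
set_option maxHeartbeats 2000000

lemma word_mul (w v : List A) : (word w : KAlg k A) * word v = word (w ++ v) := by
  simp [word, ← map_mul]
lemma incl_single (a : A) (c : k) : incl (Finsupp.single a c) = c • (word [a] : KAlg k A) := by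
  simp [incl]
lemma single_eq (m : FreeMonoid A) (c : k) :
    (MonoidAlgebra.single m c : KAlg k A) = c • word (FreeMonoid.toList m) := by
  rw [word, MonoidAlgebra.of_apply, FreeMonoid.ofList_toList, MonoidAlgebra.smul_single', mul_one]
lemma word_cons (a : A) (w : List A) :
    (word (a :: w) : KAlg k A) = incl (Finsupp.single a (1:k)) * word w := by
  rw [incl_single, one_smul, word_mul]; rfl

section master
variable (d : KA k A →ₗ[k] KA k A →ₗ[k] KA k A) (ε : k)
    (m : KAlg k A →ₗ[k] KAlg k A →ₗ[k] KAlg k A)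
    (hrec : ∀ (a b : A) (w v : List A),
      m (word (a :: w)) (word (b :: v)) =
        word [a] * m (word w) (word (b :: v)) + word [b] * m (word (a :: w)) (word v) +
          ε • (incl (d (Finsupp.single a 1) (Finsupp.single b 1)) * m (word w) (word v)))

include hrec in
lemma hgen_words (y z : KA k A) (w v : List A) :
    m (incl y * word w) (incl z * word v) =
      incl y * m (word w) (incl z * word v) + incl z * m (incl y * word w) (word v) +
        ε • (incl (d y z) * m (word w) (word v)) := by
  induction y using Finsupp.induction_linear with
  | zero => simp
  | add f g hf hg =>
    simp only [map_add, LinearMap.add_apply, add_mul, mul_add, smul_add] at *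
    rw [hf, hg]; abel
  | single a c =>
    induction z using Finsupp.induction_linear with
    | zero => simp
    | add f g hf hg =>
      simp only [map_add, LinearMap.add_apply, LinearMap.map_add, add_mul, mul_add, smul_add] at *
      rw [hf, hg]; abel
    | single b c' =>
      have ha : (Finsupp.single a c : KA k A) = c • Finsupp.single a 1 := by
        rw [Finsupp.smul_single, smul_eq_mul, mul_one]
      have hb : (Finsupp.single b c' : KA k A) = c' • Finsupp.single b 1 := by
        rw [Finsupp.smul_single, smul_eq_mul, mul_one]
      rw [ha, hb]
      simp only [map_smul, LinearMap.smul_apply, smul_mul_assoc, mul_smul_comm, smul_add,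
        smul_smul]
      rw [incl_single, incl_single]
      simp only [smul_mul_assoc, smul_eq_mul, mul_one, map_smul, LinearMap.smul_apply,
        mul_smul_comm, smul_smul, smul_add]
      rw [word_mul, word_mul]
      simp only [List.singleton_append]
      rw [hrec]
      simp only [word_mul, List.singleton_append, mul_add, smul_add, smul_smul, mul_smul_comm]
      module

include hrec in
lemma hgen (y z : KA k A) (X Y : KAlg k A) :
    m (incl y * X) (incl z * Y) =
      incl y * m X (incl z * Y) + incl z * m (incl y * X) Y +
        ε • (incl (d y z) * m X Y) := by
  induction X using MonoidAlgebra.induction_linear with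
  | zero => simp
  | add f g hf hg =>
    simp only [map_add, LinearMap.add_apply, add_mul, mul_add, smul_add] at *
    rw [hf, hg]; abel
  | single w c =>
    induction Y using MonoidAlgebra.induction_linear with
    | zero => simp
    | add f g hf hg =>
      simp only [map_add, LinearMap.add_apply, LinearMap.map_add, add_mul, mul_add, smul_add] at *
      rw [hf, hg]; abel
    | single v c' =>
      rw [single_eq w c, single_eq v c']
      simp only [map_smul, LinearMap.smul_apply, smul_mul_assoc, mul_smul_comm, smul_add,
        smul_smul]
      rw [hgen_words d ε m hrec]
      simp only [mul_add, smul_add, smul_smul, mul_smul_comm, smul_mul_assoc]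
      module

variable (hd_comm : ∀ x y : KA k A, d x y = d y x)
    (hd_assoc : ∀ x y z : KA k A, d (d x y) z = d x (d y z))
    (h1 : ∀ x : KAlg k A, m (word []) x = x)
    (h2 : ∀ x : KAlg k A, m x (word []) = x)

include hrec hd_comm h1 h2 in
lemma comm_words : ∀ (w v : List A), m (word w) (word v) = m (word v) (word w) := by
  have H : ∀ (n : ℕ) (w v : List A), w.length + v.length = n →
      m (word w) (word v) = m (word v) (word w) := by
    intro n
    induction n using Nat.strong_induction_on with
    | _ n ih =>
      intro w v hn
      match w, v with
      | [], v => rw [h1, h2]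
      | a :: w, [] => rw [h1, h2]
      | a :: w, b :: v =>
        rw [hrec, hrec]
        rw [ih (w.length + (b :: v).length) (by simp at hn ⊢; omega) w (b :: v) rfl,
          ih ((a :: w).length + v.length) (by simp at hn ⊢; omega) (a :: w) v rfl,
          ih (w.length + v.length) (by simp at hn ⊢; omega) w v rfl,
          hd_comm]
        abel
  exact fun w v => H (w.length + v.length) w v rfl

include hrec hd_assoc h1 h2 in
lemma assoc_words : ∀ (u v t : List A),
    m (m (word u) (word v)) (word t) = m (word u) (m (word v) (word t)) := by
  have H : ∀ (n : ℕ) (u v t : List A), u.length + v.length + t.length = n →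
      m (m (word u) (word v)) (word t) = m (word u) (m (word v) (word t)) := by
    intro n
    induction n using Nat.strong_induction_on with
    | _ n ih =>
      intro u v t hn
      match u, v, t with
      | [], v, t => rw [h1, h1]
      | u, [], t => rw [h2, h1]
      | u, v, [] => rw [h2, h2]
      | a :: u, b :: v, c :: t =>
        set ya := Finsupp.single a (1:k) with hya
        set yb := Finsupp.single b (1:k) with hyb
        set yc := Finsupp.single c (1:k) with hyc
        have wu := word_cons a u (k := k); rw [← hya] at wu
        have wv := word_cons b v (k := k); rw [← hyb] at wv
        have wt := word_cons c t (k := k); rw [← hyc] at wt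
        -- expansion of m u' v'
        have h_uv := hgen d ε m hrec ya yb (word u) (word v)
        rw [← wu, ← wv] at h_uv
        have h_vt := hgen d ε m hrec yb yc (word v) (word t)
        rw [← wv, ← wt] at h_vt
        -- IH instances
        have len : u.length + 1 + (v.length + 1) + (t.length + 1) = n := by
          simp only [List.length_cons] at hn; omega
        have ih1 := ih (u.length + (b::v).length + (c::t).length) (by simp only [List.length_cons]; omega) u (b::v) (c::t) rfl
        have ih2 := ih ((a::u).length + v.length + (c::t).length) (by simp only [List.length_cons]; omega) (a::u) v (c::t) rfl
        have ih3 := ih (u.length + v.length + (c::t).length) (by simp only [List.length_cons]; omega) u v (c::t) rfl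
        have ih4 := ih ((a::u).length + (b::v).length + t.length) (by simp only [List.length_cons]; omega) (a::u) (b::v) t rfl
        have ih5 := ih (u.length + (b::v).length + t.length) (by simp only [List.length_cons]; omega) u (b::v) t rfl
        have ih6 := ih ((a::u).length + v.length + t.length) (by simp only [List.length_cons]; omega) (a::u) v t rfl
        have ih7 := ih (u.length + v.length + t.length) (by omega) u v t rfl
        -- expand LHS
        conv_lhs => rw [h_uv]
        simp only [map_add, LinearMap.add_apply, map_smul, LinearMap.smul_apply]
        -- each of the three outer products with (word (c::t)) = incl yc * word t
        have e1 := hgen d ε m hrec ya yc (m (word u) (word (b::v))) (word t)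
        rw [← wt] at e1
        have e2 := hgen d ε m hrec yb yc (m (word (a::u)) (word v)) (word t)
        rw [← wt] at e2
        have e3 := hgen d ε m hrec (d ya yb) yc (m (word u) (word v)) (word t)
        rw [← wt] at e3
        rw [show m (incl ya * m (word u) (word (b::v))) (word (c::t))
              = m (incl ya * m (word u) (word (b::v))) (incl yc * word t) by rw [← wt],
          show m (incl yb * m (word (a::u)) (word v)) (word (c::t))
              = m (incl yb * m (word (a::u)) (word v)) (incl yc * word t) by rw [← wt],
          show m (incl (d ya yb) * m (word u) (word v)) (word (c::t))
              = m (incl (d ya yb) * m (word u) (word v)) (incl yc * word t) by rw [← wt]]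
        rw [hgen d ε m hrec ya yc, hgen d ε m hrec yb yc, hgen d ε m hrec (d ya yb) yc]
        rw [← wt]
        -- note: occurrences of (incl yc * word t) inside first summands got rewritten back to word (c::t)
        -- group the yc-terms back into m (m u' v') t
        have grp : incl yc * m (incl ya * m (word u) (word (b::v))) (word t)
            + incl yc * m (incl yb * m (word (a::u)) (word v)) (word t)
            + ε • (incl yc * m (incl (d ya yb) * m (word u) (word v)) (word t))
            = incl yc * m (m (word (a::u)) (word (b::v))) (word t) := by
          rw [h_uv]
          simp only [map_add, LinearMap.add_apply, map_smul, LinearMap.smul_apply, mul_add,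
            mul_smul_comm]
        rw [ih1, ih2, ih3, ih5, ih6, ih7, hd_assoc]
        rw [h_vt]
        simp only [map_add, LinearMap.add_apply, map_smul, LinearMap.smul_apply, mul_add,
          mul_smul_comm, smul_add, smul_smul]
        have f1 := hgen d ε m hrec ya yb (word u) (m (word v) (word (c::t)))
        rw [← wu] at f1
        have f2 := hgen d ε m hrec ya yc (word u) (m (word (b::v)) (word t))
        rw [← wu] at f2
        have f3 := hgen d ε m hrec ya (d yb yc) (word u) (m (word v) (word t))
        rw [← wu] at f3
        rw [f1, f2, f3]
        rw [← ih4]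
        have g : m (m (word (a::u)) (word (b::v))) (word t)
            = m (incl ya * m (word u) (word (b::v))) (word t)
              + m (incl yb * m (word (a::u)) (word v)) (word t)
              + ε • m (incl (d ya yb) * m (word u) (word v)) (word t) := by
          conv_lhs => rw [h_uv]
          simp only [map_add, LinearMap.add_apply, map_smul, LinearMap.smul_apply]
        rw [g]
        simp only [mul_add, smul_add, smul_smul, mul_smul_comm]
        abel
  exact fun u v t => H _ u v t rfl
include hrec hd_comm h1 h2 in
lemma comm_all : ∀ x y : KAlg k A, m x y = m y x := by
  intro x y
  induction x using MonoidAlgebra.induction_linear with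
  | zero => simp
  | add f g hf hg => simp only [map_add, LinearMap.add_apply, hf, hg]
  | single w c =>
    induction y using MonoidAlgebra.induction_linear with
    | zero => simp
    | add f g hf hg => simp only [map_add, LinearMap.add_apply, hf, hg]
    | single v c' =>
      rw [single_eq w c, single_eq v c']
      simp only [map_smul, LinearMap.smul_apply, smul_smul, mul_comm c c']
      rw [comm_words d ε m hrec hd_comm h1 h2]

include hrec hd_assoc h1 h2 in
lemma assoc_all : ∀ x y z : KAlg k A, m (m x y) z = m x (m y z) := by
  intro x y z
  induction x using MonoidAlgebra.induction_linear with
  | zero => simp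
  | add f g hf hg => simp only [map_add, LinearMap.add_apply, hf, hg]
  | single w c =>
    induction y using MonoidAlgebra.induction_linear with
    | zero => simp
    | add f g hf hg => simp only [map_add, LinearMap.add_apply, LinearMap.map_add, hf, hg]
    | single v c' =>
      induction z using MonoidAlgebra.induction_linear with
      | zero => simp
      | add f g hf hg => simp only [map_add, LinearMap.add_apply, LinearMap.map_add, hf, hg]
      | single t c'' =>
        rw [single_eq w c, single_eq v c', single_eq t c'']
        simp only [map_smul, LinearMap.smul_apply, smul_smul]
        rw [assoc_words d ε m hrec hd_assoc h1 h2]; ring_nf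
end master

/-- Theorem 2.1 of Hoffman–Ihara: `k⟨A⟩` equipped with the quasi-shuffle
product `*` (here `mS`) is a commutative associative `k`-algebra with unit the empty word,
and likewise for the product `⋆` (here `mT`). -/
theorem quasiShuffle_comm_assoc
    {k A : Type*} [Field k] [CharZero k] [Countable A]
    (d : KA k A →ₗ[k] KA k A →ₗ[k] KA k A)
    (hd_comm : ∀ x y, d x y = d y x)
    (hd_assoc : ∀ x y z, d (d x y) z = d x (d y z))
    (mS : KAlg k A →ₗ[k] KAlg k A →ₗ[k] KAlg k A)
    (hS_one_left : ∀ x, mS (word []) x = x)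
    (hS_one_right : ∀ x, mS x (word []) = x)
    (hS_rec : ∀ (a b : A) (w v : List A),
      mS (word (a :: w)) (word (b :: v)) =
        word [a] * mS (word w) (word (b :: v)) + word [b] * mS (word (a :: w)) (word v) +
          incl (d (Finsupp.single a 1) (Finsupp.single b 1)) * mS (word w) (word v))
    (mT : KAlg k A →ₗ[k] KAlg k A →ₗ[k] KAlg k A)
    (hT_one_left : ∀ x, mT (word []) x = x)
    (hT_one_right : ∀ x, mT x (word []) = x)
    (hT_rec : ∀ (a b : A) (w v : List A),
      mT (word (a :: w)) (word (b :: v)) =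
        word [a] * mT (word w) (word (b :: v)) + word [b] * mT (word (a :: w)) (word v) -
          incl (d (Finsupp.single a 1) (Finsupp.single b 1)) * mT (word w) (word v))
    :
    ((∀ x y, mS x y = mS y x) ∧ (∀ x y z, mS (mS x y) z = mS x (mS y z))) ∧
    ((∀ x y, mT x y = mT y x) ∧ (∀ x y z, mT (mT x y) z = mT x (mT y z))) := by
  have hrecS : ∀ (a b : A) (w v : List A),
      mS (word (a :: w)) (word (b :: v)) =
        word [a] * mS (word w) (word (b :: v)) + word [b] * mS (word (a :: w)) (word v) +
          (1 : k) • (incl (d (Finsupp.single a 1) (Finsupp.single b 1)) * mS (word w) (word v)) := by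
    intro a b w v
    rw [hS_rec, one_smul]
  have hrecT : ∀ (a b : A) (w v : List A),
      mT (word (a :: w)) (word (b :: v)) =
        word [a] * mT (word w) (word (b :: v)) + word [b] * mT (word (a :: w)) (word v) +
          (-1 : k) • (incl (d (Finsupp.single a 1) (Finsupp.single b 1)) * mT (word w) (word v)) := by
    intro a b w v
    rw [hT_rec]
    module
  exact ⟨⟨comm_all d 1 mS hrecS hd_comm hS_one_left hS_one_right,
          assoc_all d 1 mS hrecS hd_assoc hS_one_left hS_one_right⟩,
         ⟨comm_all d (-1) mT hrecT hd_comm hT_one_left hT_one_right,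
          assoc_all d (-1) mT hrecT hd_assoc hT_one_left hT_one_right⟩⟩

end QuasiShuffle
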